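/- arXiv:1506.01556 — 11 statements merged into one kernel-verified Lean document; each statement's English description precedes it below -/
import Mathlib

section
/- Let H be a real Hilbert space, β > 0, and T : H → H. Then β·Id + T is (1/(2β))-cocoercive (i.e., ⟨(βId+T)x − (βId+T)y, x − y⟩ ≥ (1/(2β))‖(βId+T)x − (βId+T)y‖² for all x, y) if and only if T is β-Lipschitz continuous. -/
/-! With `u = x - y` and `v = T x - T y`, expanding the square gives
`2β⟪βu + v, u⟫ - ‖βu + v‖² = β²‖u‖² - ‖v‖²`, so for `β > 0` the cocoercivity inequality at
`(x, y)` is exactly the Lipschitz inequality at `(x, y)`. -/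

open RealInnerProductSpace

section

variable {H : Type*} [NormedAddCommGroup H] [InnerProductSpace ℝ H]

lemma two_mul_inner_smul_add_sub_norm_sq (β : ℝ) (u v : H) :
    2 * β * ⟪β • u + v, u⟫ - ‖β • u + v‖ ^ 2 = (β * ‖u‖) ^ 2 - ‖v‖ ^ 2 := by
  rw [norm_add_sq_real, norm_smul, inner_add_left, real_inner_smul_left, real_inner_smul_left,
    real_inner_self_eq_norm_sq, real_inner_comm, mul_pow, Real.norm_eq_abs, sq_abs]
  ring

lemma norm_sq_smul_add_le_inner_iff {β : ℝ} (hβ : 0 < β) (u v : H) :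
    1 / (2 * β) * ‖β • u + v‖ ^ 2 ≤ ⟪β • u + v, u⟫ ↔ ‖v‖ ≤ β * ‖u‖ := by
  have h := two_mul_inner_smul_add_sub_norm_sq β u v
  rw [one_div, inv_mul_le_iff₀ (by positivity),
    ← pow_le_pow_iff_left₀ (norm_nonneg v) (by positivity) two_ne_zero]
  constructor <;> intro <;> linarith

end

theorem coco_vs_lipschitz
    {H : Type*} [NormedAddCommGroup H] [InnerProductSpace ℝ H]
    (β : ℝ) (hβ : 0 < β) (T : H → H) :
    (∀ x y : H, ⟪(β • x + T x) - (β • y + T y), x - y⟫ ≥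
      (1 / (2 * β)) * ‖(β • x + T x) - (β • y + T y)‖ ^ 2) ↔
    (∀ x y : H, ‖T x - T y‖ ≤ β * ‖x - y‖) := by
  have hdiff (x y : H) : (β • x + T x) - (β • y + T y) = β • (x - y) + (T x - T y) := by
    rw [smul_sub]; abel
  refine forall₂_congr fun x y => ?_
  rw [hdiff, ge_iff_le]
  exact norm_sq_smul_add_le_inner_iff hβ (x - y) (T x - T y)
end

section
/- Let H be a real Hilbert space and let S : H → H be an α-averaged θ-negatively averaged operator, i.e., S = (1−α)Id + αT where −T is θ-averaged, α ∈ (0,1), θ ∈ (0,1). Then S is Lipschitz with constant |1 − 2α + αθ| + αθ, which is strictly less than 1; hence S is contractive. -/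
/-!
Substituting `T` into `S` gives `S = (1 - 2α + αθ) Id + αθ N`, so the triangle inequality yields
the Lipschitz constant `|1 - 2α + αθ| + αθ`. Depending on the sign of `1 - 2α + αθ`, this constant
equals `1 - 2α(1 - θ)` or `2α - 1`, and both are `< 1`.
-/

theorem norm_smul_add_smul_sub_le {E : Type*} [SeminormedAddCommGroup E] [NormedSpace ℝ E]
    (a b : ℝ) {N : E → E} (hN : ∀ x y : E, ‖N x - N y‖ ≤ ‖x - y‖) (x y : E) :
    ‖(a • x + b • N x) - (a • y + b • N y)‖ ≤ (|a| + |b|) * ‖x - y‖ :=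
  calc ‖(a • x + b • N x) - (a • y + b • N y)‖
      = ‖a • (x - y) + b • (N x - N y)‖ := by rw [smul_sub, smul_sub, add_sub_add_comm]
    _ ≤ |a| * ‖x - y‖ + |b| * ‖N x - N y‖ := by
        simpa only [norm_smul, Real.norm_eq_abs] using norm_add_le (a • (x - y)) (b • (N x - N y))
    _ ≤ |a| * ‖x - y‖ + |b| * ‖x - y‖ := by gcongr; exact hN x y
    _ = (|a| + |b|) * ‖x - y‖ := by ring

theorem abs_one_sub_two_mul_add_mul_add_mul_lt_one {α θ : ℝ} (hα0 : 0 < α) (hα1 : α < 1)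
    (hθ1 : θ < 1) : |1 - 2 * α + α * θ| + α * θ < 1 := by
  rcases abs_cases (1 - 2 * α + α * θ) with ⟨h, -⟩ | ⟨h, -⟩ <;> rw [h] <;> nlinarith

theorem averaged_negatively_averaged_contractive
    {H : Type*} [NormedAddCommGroup H] [InnerProductSpace ℝ H]
    (α θ : ℝ) (hα0 : 0 < α) (hα1 : α < 1) (hθ0 : 0 < θ) (hθ1 : θ < 1)
    (T N S : H → H)
    (hN : ∀ x y : H, ‖N x - N y‖ ≤ ‖x - y‖)
    (hT : ∀ x : H, T x = (θ - 1) • x + θ • N x)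
    (hS : ∀ x : H, S x = (1 - α) • x + α • T x) :
    (∀ x y : H, ‖S x - S y‖ ≤ (|1 - 2 * α + α * θ| + α * θ) * ‖x - y‖) ∧
    |1 - 2 * α + α * θ| + α * θ < 1 := by
  have hS_eq : ∀ x, S x = (1 - 2 * α + α * θ) • x + (α * θ) • N x := fun x => by
    rw [hS, hT]
    module
  refine ⟨fun x y => ?_, abs_one_sub_two_mul_add_mul_add_mul_lt_one hα0 hα1 hθ1⟩
  have hαθ : |α * θ| = α * θ := abs_of_pos (mul_pos hα0 hθ0)
  simpa only [hS_eq, hαθ] using norm_smul_add_smul_sub_le (1 - 2 * α + α * θ) (α * θ) hN x y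
end

section
/- Let H be a real Hilbert space, T_θ : H → H be θ-negatively averaged and T_α : H → H be α-averaged with θ, α ∈ (0,1). Then the composition T_θ ∘ T_α is (κ/(κ+1))-negatively averaged, where κ = θ/(1−θ) + α/(1−α). -/
/-!
Write `T = (1 - α) Id + α N` and put `d = x - y`, `m = N x - N y`. Expanding the squares gives
`‖T x - T y‖² + (1 - α)/α ‖(Id - T) x - (Id - T) y‖² = ‖d‖² - α (‖d‖² - ‖m‖²)`,
so `T` is `α`-averaged iff the left side is at most `‖x - y‖²`. The residual `Id - T₁ T₂` is the
sum of the residuals of `T₂` and of `T₁` (taken at `T₂ x`), and Sedrakyan's inequality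
`(A + B)²/(u + v) ≤ A²/u + B²/v` with `uᵢ = αᵢ/(1 - αᵢ)` adds the two inequalities up to the one
for `κ/(κ + 1)`, because `(1 - κ/(κ + 1))/(κ/(κ + 1)) = 1/κ`. Finally
`-(T_θ ∘ T_α) = (-T_θ) ∘ T_α`.
-/
section

variable {H : Type*} [NormedAddCommGroup H] [InnerProductSpace ℝ H]

def IsAveraged (α : ℝ) (T : H → H) : Prop :=
  ∃ N : H → H, (∀ x y : H, ‖N x - N y‖ ≤ ‖x - y‖) ∧ ∀ x : H, T x = (1 - α) • x + α • N x

-- At `α = 0` both sides are `‖d‖²`, as `1 / 0 = 0`.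
lemma norm_sq_add_residual_of_averaged {α : ℝ} (d m : H) :
    ‖(1 - α) • d + α • m‖ ^ 2 + (1 - α) / α * ‖d - ((1 - α) • d + α • m)‖ ^ 2
      = ‖d‖ ^ 2 - α * (‖d‖ ^ 2 - ‖m‖ ^ 2) := by
  have hres : d - ((1 - α) • d + α • m) = α • (d - m) := by module
  rw [hres, norm_add_sq_real, norm_smul α (d - m), mul_pow, norm_sub_sq_real]
  simp only [norm_smul, real_inner_smul_left, real_inner_smul_right, Real.norm_eq_abs, mul_pow,
    sq_abs]
  field_simp
  ring

theorem isAveraged_iff {α : ℝ} (hα : 0 < α) {T : H → H} :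
    IsAveraged α T ↔ ∀ x y : H,
      ‖T x - T y‖ ^ 2 + (1 - α) / α * ‖(x - T x) - (y - T y)‖ ^ 2 ≤ ‖x - y‖ ^ 2 := by
  have hidentity (N : H → H) (hT : ∀ x, T x = (1 - α) • x + α • N x) (x y : H) :
      ‖T x - T y‖ ^ 2 + (1 - α) / α * ‖(x - T x) - (y - T y)‖ ^ 2
        = ‖x - y‖ ^ 2 - α * (‖x - y‖ ^ 2 - ‖N x - N y‖ ^ 2) := by
    have hdiff : T x - T y = (1 - α) • (x - y) + α • (N x - N y) := by
      rw [hT x, hT y]; module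
    rw [← norm_sq_add_residual_of_averaged, ← hdiff, sub_sub_sub_comm]
  constructor
  · rintro ⟨N, hN, hT⟩ x y
    rw [hidentity N hT]
    have := pow_le_pow_left₀ (norm_nonneg _) (hN x y) 2
    nlinarith
  · intro h
    set N : H → H := fun x => α⁻¹ • (T x - (1 - α) • x)
    have hT (x : H) : T x = (1 - α) • x + α • N x := by
      simp only [N, smul_smul, mul_inv_cancel₀ hα.ne', one_smul, add_sub_cancel]
    refine ⟨N, fun x y => ?_, hT⟩
    have := h x y
    rw [hidentity N hT] at this
    exact pow_le_pow_iff_left₀ (norm_nonneg _) (norm_nonneg _) two_ne_zero |>.mp (by nlinarith)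

lemma add_sq_div_add_le {u v : ℝ} (hu : 0 < u) (hv : 0 < v) (A B : ℝ) :
    (A + B) ^ 2 / (u + v) ≤ A ^ 2 / u + B ^ 2 / v := by
  simpa [Fin.sum_univ_two] using
    Finset.sq_sum_div_le_sum_sq_div Finset.univ ![A, B] (g := ![u, v])
      (by simp [Fin.forall_fin_two, hu, hv])

lemma norm_add_sq_div_add_le {E : Type*} [SeminormedAddCommGroup E] {u v : ℝ} (hu : 0 < u)
    (hv : 0 < v) (a b : E) : ‖a + b‖ ^ 2 / (u + v) ≤ ‖a‖ ^ 2 / u + ‖b‖ ^ 2 / v :=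
  (div_le_div_of_nonneg_right (pow_le_pow_left₀ (norm_nonneg _) (norm_add_le a b) 2)
    (add_pos hu hv).le).trans (add_sq_div_add_le hu hv _ _)

theorem IsAveraged.comp {α₁ α₂ : ℝ} {T₁ T₂ : H → H} (h₁ : IsAveraged α₁ T₁)
    (h₂ : IsAveraged α₂ T₂) (hα₁0 : 0 < α₁) (hα₁1 : α₁ < 1) (hα₂0 : 0 < α₂) (hα₂1 : α₂ < 1) :
    IsAveraged ((α₁ / (1 - α₁) + α₂ / (1 - α₂)) / (α₁ / (1 - α₁) + α₂ / (1 - α₂) + 1))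
      (T₁ ∘ T₂) := by
  set u₁ := α₁ / (1 - α₁)
  set u₂ := α₂ / (1 - α₂)
  have hu₁ : 0 < u₁ := div_pos hα₁0 (sub_pos.2 hα₁1)
  have hu₂ : 0 < u₂ := div_pos hα₂0 (sub_pos.2 hα₂1)
  have hw₁ : (1 - α₁) / α₁ = u₁⁻¹ := (inv_div _ _).symm
  have hw₂ : (1 - α₂) / α₂ = u₂⁻¹ := (inv_div _ _).symm
  have hκweight : (1 - (u₁ + u₂) / (u₁ + u₂ + 1)) / ((u₁ + u₂) / (u₁ + u₂ + 1))
      = (u₁ + u₂)⁻¹ := by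
    field_simp
    ring
  rw [isAveraged_iff (by positivity)] at h₁ h₂ ⊢
  intro x y
  have hres : (x - T₁ (T₂ x)) - (y - T₁ (T₂ y))
      = ((x - T₂ x) - (y - T₂ y)) + ((T₂ x - T₁ (T₂ x)) - (T₂ y - T₁ (T₂ y))) := by abel
  have h₁' := h₁ (T₂ x) (T₂ y)
  have h₂' := h₂ x y
  rw [hw₁, ← div_eq_inv_mul] at h₁'
  rw [hw₂, ← div_eq_inv_mul] at h₂'
  have hresidual := norm_add_sq_div_add_le hu₂ hu₁
    ((x - T₂ x) - (y - T₂ y)) ((T₂ x - T₁ (T₂ x)) - (T₂ y - T₁ (T₂ y)))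
  rw [← hres, add_comm u₂] at hresidual
  rw [Function.comp_apply, Function.comp_apply, hκweight, ← div_eq_inv_mul]
  linarith

lemma isAveraged_neg_iff {θ : ℝ} {T : H → H} :
    IsAveraged θ (-T) ↔ ∃ N : H → H, (∀ x y : H, ‖N x - N y‖ ≤ ‖x - y‖) ∧
      ∀ x : H, T x = (θ - 1) • x + θ • N x := by
  have neg_nonexpansive {N : H → H} (hN : ∀ x y : H, ‖N x - N y‖ ≤ ‖x - y‖) (x y : H) :
      ‖(-N) x - (-N) y‖ ≤ ‖x - y‖ := by
    simpa only [Pi.neg_apply, neg_sub_neg, norm_sub_rev] using hN x y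
  constructor
  · rintro ⟨N, hN, hT⟩
    refine ⟨-N, neg_nonexpansive hN, fun x => ?_⟩
    rw [← neg_neg (T x), ← Pi.neg_apply T, hT, Pi.neg_apply]
    module
  · rintro ⟨N, hN, hT⟩
    refine ⟨-N, neg_nonexpansive hN, fun x => ?_⟩
    rw [Pi.neg_apply, hT, Pi.neg_apply]
    module

end

theorem comp_neg_averaged_averaged
    {H : Type*} [NormedAddCommGroup H] [InnerProductSpace ℝ H]
    (θ α : ℝ) (hθ0 : 0 < θ) (hθ1 : θ < 1) (hα0 : 0 < α) (hα1 : α < 1)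
    (Tθ Tα : H → H)
    (hTθ : ∃ N : H → H, (∀ x y : H, ‖N x - N y‖ ≤ ‖x - y‖) ∧
      ∀ x : H, Tθ x = (θ - 1) • x + θ • N x)
    (hTα : ∃ N : H → H, (∀ x y : H, ‖N x - N y‖ ≤ ‖x - y‖) ∧
      ∀ x : H, Tα x = (1 - α) • x + α • N x) :
    ∃ N : H → H, (∀ x y : H, ‖N x - N y‖ ≤ ‖x - y‖) ∧
      ∀ x : H, Tθ (Tα x) =
        ((θ / (1 - θ) + α / (1 - α)) / (θ / (1 - θ) + α / (1 - α) + 1) - 1) • x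
        + ((θ / (1 - θ) + α / (1 - α)) / (θ / (1 - θ) + α / (1 - α) + 1)) • N x := by
  rw [← isAveraged_neg_iff] at hTθ
  exact isAveraged_neg_iff.mp (hTθ.comp hTα hθ0 hθ1 hα0 hα1)
end

section
/- Let H be a real Hilbert space and B : H → H be (1/β)-cocoercive with β > 0. Then the resolvent J_B = (Id + B)^{-1} is (β/(2(1+β)))-averaged, i.e., for all x, y ∈ H: (2 − β/(1+β))⟨J_Bx − J_By, x − y⟩ ≥ (1 − β/(1+β))‖x − y‖² + ‖J_Bx − J_By‖². -/
open RealInnerProductSpace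

theorem sub_eq_add_of_resolvent {H : Type*} [AddCommGroup H] {B J : H → H}
    (hJ : ∀ x : H, J x + B (J x) = x) (x y : H) :
    x - y = (J x - J y) + (B (J x) - B (J y)) := by
  conv_lhs => rw [← hJ x, ← hJ y]
  abel

section InnerProduct

variable {H : Type*} [NormedAddCommGroup H] [InnerProductSpace ℝ H]

theorem averaged_defect_eq {β : ℝ} (hβ : 1 + β ≠ 0) (u v : H) :
    (2 - β / (1 + β)) * ⟪u, u + v⟫ - ((1 - β / (1 + β)) * ‖u + v‖ ^ 2 + ‖u‖ ^ 2) =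
      (β * ⟪u, v⟫ - ‖v‖ ^ 2) / (1 + β) := by
  rw [inner_add_right, norm_add_sq_real, real_inner_self_eq_norm_sq]
  field_simp
  ring

end InnerProduct

theorem resolvent_of_cocoercive_averaged
    {H : Type*} [NormedAddCommGroup H] [InnerProductSpace ℝ H]
    (β : ℝ) (hβ : 0 < β) (B J : H → H)
    (hB : ∀ x y : H, ⟪B x - B y, x - y⟫ ≥ (1 / β) * ‖B x - B y‖ ^ 2)
    (hJ : ∀ x : H, J x + B (J x) = x) :
    ∀ x y : H,
      (2 - β / (1 + β)) * ⟪J x - J y, x - y⟫ ≥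
        (1 - β / (1 + β)) * ‖x - y‖ ^ 2 + ‖J x - J y‖ ^ 2 := by
  intro x y
  have hcoco : ‖B (J x) - B (J y)‖ ^ 2 ≤ β * ⟪J x - J y, B (J x) - B (J y)⟫ := by
    have h := hB (J x) (J y)
    rwa [ge_iff_le, one_div_mul_eq_div, div_le_iff₀' hβ, real_inner_comm] at h
  rw [ge_iff_le, ← sub_nonneg, sub_eq_add_of_resolvent hJ x y, averaged_defect_eq (by positivity)]
  exact div_nonneg (sub_nonneg.2 hcoco) (by positivity)
end

section
/- Let H be a real Hilbert space and B : H → H be (1/β)-cocoercive with β > 0. Then the reflected resolvent R_B = 2J_B − Id is (β/(1+β))-averaged, where J_B = (Id + B)^{-1}. -/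
/-!
With `d = J x - J y` and `b = B (J x) - B (J y)` one has `x - y = d + b` and
`R x - R y = d - b`, so `‖x - y‖² - ‖R x - R y‖² = 4 ⟪d, b⟫ ≥ (4 / β) ‖b‖²` by cocoercivity.
Since `(x - R x) - (y - R y) = 2 b`, this is the inequality
`‖R x - R y‖² + ((1 - α) / α) ‖(x - R x) - (y - R y)‖² ≤ ‖x - y‖²` with `α = β / (1 + β)`,
which says exactly that `N = (1 - 1/α) Id + (1/α) R` is nonexpansive.
-/

open RealInnerProductSpace

theorem sub_eq_resolvent_sub_add {E : Type*} [AddCommGroup E] {B J : E → E}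
    (hJ : ∀ x, J x + B (J x) = x) (x y : E) :
    x - y = (J x - J y) + (B (J x) - B (J y)) := by
  conv_lhs => rw [← hJ x, ← hJ y]
  abel

section InnerProductSpace

variable {H : Type*} [NormedAddCommGroup H] [InnerProductSpace ℝ H]

theorem norm_one_sub_smul_add_smul_sq (t : ℝ) (u v : H) :
    ‖(1 - t) • u + t • v‖ ^ 2 =
      (1 - t) * ‖u‖ ^ 2 + t * ‖v‖ ^ 2 - t * (1 - t) * ‖u - v‖ ^ 2 := by
  rw [norm_add_sq_real, norm_sub_sq_real, norm_smul, norm_smul, real_inner_smul_left,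
    real_inner_smul_right, mul_pow, mul_pow, Real.norm_eq_abs, Real.norm_eq_abs, sq_abs, sq_abs]
  ring

theorem exists_nonexpansive_of_norm_sq_add_le {T : H → H} {α : ℝ} (hα : 0 < α)
    (hT : ∀ x y, ‖T x - T y‖ ^ 2 + (1 - α) / α * ‖(x - T x) - (y - T y)‖ ^ 2 ≤ ‖x - y‖ ^ 2) :
    ∃ N : H → H, (∀ x y, ‖N x - N y‖ ≤ ‖x - y‖) ∧ ∀ x, T x = (1 - α) • x + α • N x := by
  refine ⟨fun x => (1 - α⁻¹) • x + α⁻¹ • T x, fun x y => ?_, fun x => ?_⟩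
  · have hdiff : (1 - α⁻¹) • x + α⁻¹ • T x - ((1 - α⁻¹) • y + α⁻¹ • T y) =
        (1 - α⁻¹) • (x - y) + α⁻¹ • (T x - T y) := by module
    have hsq : ‖(1 - α⁻¹) • (x - y) + α⁻¹ • (T x - T y)‖ ^ 2 =
        (1 - α⁻¹) * ‖x - y‖ ^ 2 +
          α⁻¹ * (‖T x - T y‖ ^ 2 + (1 - α) / α * ‖(x - T x) - (y - T y)‖ ^ 2) := by
      rw [norm_one_sub_smul_add_smul_sq,
        show x - y - (T x - T y) = (x - T x) - (y - T y) by abel]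
      field_simp
      ring
    rw [hdiff, ← pow_le_pow_iff_left₀ (norm_nonneg _) (norm_nonneg _) two_ne_zero, hsq]
    have := mul_le_mul_of_nonneg_left (hT x y) (inv_nonneg.mpr hα.le)
    linarith
  · match_scalars <;> field_simp; ring

theorem norm_reflected_resolvent_sq_add_le {β : ℝ} {B J : H → H}
    (hB : ∀ x y, ⟪B x - B y, x - y⟫ ≥ (1 / β) * ‖B x - B y‖ ^ 2)
    (hJ : ∀ x, J x + B (J x) = x) (x y : H) :
    ‖((2 : ℝ) • J x - x) - ((2 : ℝ) • J y - y)‖ ^ 2 +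
        1 / β * ‖(x - ((2 : ℝ) • J x - x)) - (y - ((2 : ℝ) • J y - y))‖ ^ 2 ≤ ‖x - y‖ ^ 2 := by
  set d := J x - J y
  set b := B (J x) - B (J y)
  have hxy : x - y = d + b := sub_eq_resolvent_sub_add hJ x y
  have hR : ((2 : ℝ) • J x - x) - ((2 : ℝ) • J y - y) = d - b := by
    linear_combination (norm := module) -hxy
  have hI : (x - ((2 : ℝ) • J x - x)) - (y - ((2 : ℝ) • J y - y)) = (2 : ℝ) • b := by
    linear_combination (norm := module) (2 : ℝ) • hxy
  have hcoco : 1 / β * ‖b‖ ^ 2 ≤ ⟪d, b⟫ := by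
    rw [real_inner_comm]; exact hB (J x) (J y)
  rw [hR, hI, hxy, norm_sub_sq_real, norm_add_sq_real, norm_smul, mul_pow, Real.norm_two]
  linarith

end InnerProductSpace

theorem reflected_resolvent_of_cocoercive_averaged
    {H : Type*} [NormedAddCommGroup H] [InnerProductSpace ℝ H]
    (β : ℝ) (hβ : 0 < β) (B J : H → H)
    (hB : ∀ x y : H, ⟪B x - B y, x - y⟫ ≥ (1 / β) * ‖B x - B y‖ ^ 2)
    (hJ : ∀ x : H, J x + B (J x) = x) :
    ∃ N : H → H, (∀ x y : H, ‖N x - N y‖ ≤ ‖x - y‖) ∧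
      ∀ x : H, (2 : ℝ) • J x - x =
        (1 - β / (1 + β)) • x + (β / (1 + β)) • N x := by
  have hratio : (1 - β / (1 + β)) / (β / (1 + β)) = 1 / β := by
    field_simp
    ring
  have hα : 0 < β / (1 + β) := by positivity
  exact exists_nonexpansive_of_norm_sq_add_le (T := fun x => (2 : ℝ) • J x - x) hα
    (by simpa only [hratio] using norm_reflected_resolvent_sq_add_le hB hJ)
end

section
/- Let H be a real Hilbert space and A : H → 2^H be maximally monotone and σ-strongly monotone with σ > 0. Then the reflected resolvent R_A = 2J_A − Id is (1/(1+σ))-negatively averaged, i.e., −R_A is (1/(1+σ))-averaged. -/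
/-!
Strong monotonicity of `A` with `x - J x ∈ A (J x)` makes `J` a `(1 + σ)`-cocoercive map, and for a
`β`-cocoercive `T` with `β ≥ 0` the map `Id - 2β T` is nonexpansive. Taking `N = Id - 2(1 + σ) J`,
the identity `-(2 J - Id) = (1 - 1/(1 + σ)) Id + (1/(1 + σ)) N` is then pure algebra.
-/

open RealInnerProductSpace

section

variable {H : Type*} [NormedAddCommGroup H] [InnerProductSpace ℝ H]

theorem cocoercive_of_strongly_monotone_of_resolvent {σ : ℝ} {A : H → Set H} {J : H → H}
    (hA : ∀ x y u v : H, u ∈ A x → v ∈ A y → ⟪u - v, x - y⟫ ≥ σ * ‖x - y‖ ^ 2)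
    (hJ : ∀ x : H, x - J x ∈ A (J x)) (x y : H) :
    (1 + σ) * ‖J x - J y‖ ^ 2 ≤ ⟪x - y, J x - J y⟫ := by
  have hmono := hA (J x) (J y) (x - J x) (y - J y) (hJ x) (hJ y)
  have hsplit : ⟪(x - J x) - (y - J y), J x - J y⟫ = ⟪x - y, J x - J y⟫ - ‖J x - J y‖ ^ 2 := by
    rw [show (x - J x) - (y - J y) = (x - y) - (J x - J y) by abel, inner_sub_left,
      real_inner_self_eq_norm_sq]
  linarith

theorem norm_sub_two_smul_le_of_cocoercive {β : ℝ} (hβ : 0 ≤ β) {T : H → H}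
    (hT : ∀ x y : H, β * ‖T x - T y‖ ^ 2 ≤ ⟪x - y, T x - T y⟫) (x y : H) :
    ‖(x - (2 * β) • T x) - (y - (2 * β) • T y)‖ ≤ ‖x - y‖ := by
  have hdiff : (x - (2 * β) • T x) - (y - (2 * β) • T y) = (x - y) - (2 * β) • (T x - T y) := by
    rw [smul_sub]; abel
  have hsq : ‖(x - y) - (2 * β) • (T x - T y)‖ ^ 2 ≤ ‖x - y‖ ^ 2 := by
    rw [norm_sub_sq_real, norm_smul, real_inner_smul_right, Real.norm_of_nonneg (by positivity)]
    nlinarith [hT x y]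
  rw [hdiff]
  exact (sq_le_sq₀ (norm_nonneg _) (norm_nonneg _)).mp hsq

theorem neg_two_smul_sub_eq_averaged {c : ℝ} (hc : c ≠ 0) (x j : H) :
    -((2 : ℝ) • j - x) = (1 - 1 / c) • x + (1 / c) • (x - (2 * c) • j) := by
  match_scalars <;> (field_simp; try ring)

end

theorem reflected_resolvent_of_strongly_monotone_neg_averaged
    {H : Type*} [NormedAddCommGroup H] [InnerProductSpace ℝ H]
    (σ : ℝ) (hσ : 0 < σ) (A : H → Set H) (J : H → H)
    (hA : ∀ x y u v : H, u ∈ A x → v ∈ A y → ⟪u - v, x - y⟫ ≥ σ * ‖x - y‖ ^ 2)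
    (hJ : ∀ x : H, x - J x ∈ A (J x)) :
    ∃ N : H → H, (∀ x y : H, ‖N x - N y‖ ≤ ‖x - y‖) ∧
      ∀ x : H, -((2 : ℝ) • J x - x) =
        (1 - 1 / (1 + σ)) • x + (1 / (1 + σ)) • N x :=
  ⟨fun x => x - (2 * (1 + σ)) • J x,
    norm_sub_two_smul_le_of_cocoercive (by linarith)
      (cocoercive_of_strongly_monotone_of_resolvent hA hJ),
    fun x => neg_two_smul_sub_eq_averaged (by linarith) x (J x)⟩
end

section
/- Let H be a real Hilbert space, A : H → 2^H maximally monotone and σ-strongly monotone (σ > 0), and B : H → H be (1/β)-cocoercive (β > 0). Then the composition R_A ∘ R_B of the reflected resolvents is φ-negatively averaged with φ = (1/σ + β)/(1 + 1/σ + β). -/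
open RealInnerProductSpace

lemma scalar_key (σ β φ E Dd G ied ieg idg ne ng : ℝ)
    (hσ : 0 < σ) (hβ : 0 < β)
    (e1 : (1+σ+σ*β)*(1-φ) = σ) (e2 : (1+σ+σ*β)*φ = 1+σ*β)
    (hE : E = ne^2) (hG : G = ng^2) (hne : 0 ≤ ne) (hng : 0 ≤ ng)
    (h1 : ied - ieg - E ≥ σ*E) (h2 : G ≤ β*idg) (h3 : ieg ≤ ne*ng) :
    4*E + φ^2*Dd + (2-φ)^2*G - 4*φ*ied + 4*(2-φ)*ieg - 2*φ*(2-φ)*idg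
      ≤ φ^2*(Dd + 2*idg + G) := by
  subst hE hG
  have hstar : ne^2 + (1-φ)*ng^2 - φ*ied + (2-φ)*ieg - φ*idg ≤ 0 := by
    have hpos : 0 < (1+σ+σ*β)*β := by positivity
    have expand : (1+σ+σ*β)*β*(ne^2 + (1-φ)*ng^2 - φ*ied + (2-φ)*ieg - φ*idg)
        = (1+σ+σ*β)*β*ne^2 + σ*β*ng^2 - (1+σ*β)*β*ied + (1+2*σ+σ*β)*β*ieg
          - (1+σ*β)*β*idg := by
      linear_combination (β*ng^2)*e1 - β*(ied+ieg+idg)*e2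
    have h1m : (β+σ*β^2)*(σ*ne^2) ≤ (β+σ*β^2)*(ied - ieg - ne^2) :=
      mul_le_mul_of_nonneg_left h1 (by positivity)
    have h2m : (1+σ*β)*ng^2 ≤ (1+σ*β)*(β*idg) :=
      mul_le_mul_of_nonneg_left h2 (by positivity)
    have h3m : (2*σ*β)*ieg ≤ (2*σ*β)*(ne*ng) :=
      mul_le_mul_of_nonneg_left h3 (by positivity)
    have key : (1+σ+σ*β)*β*(ne^2 + (1-φ)*ng^2 - φ*ied + (2-φ)*ieg - φ*idg) ≤ 0 := by
      rw [expand]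
      nlinarith [sq_nonneg (σ*β*ne - ng), h1m, h2m, h3m]
    nlinarith [key, hpos]
  nlinarith [hstar]

lemma vec_key {H : Type*} [NormedAddCommGroup H] [InnerProductSpace ℝ H]
    (σ β φ : ℝ) (hσ : 0 < σ) (hβ : 0 < β)
    (e1 : (1+σ+σ*β)*(1-φ) = σ) (e2 : (1+σ+σ*β)*φ = 1+σ*β) (hφ : 0 < φ)
    (e d g : H)
    (h1 : ⟪(d - g) - e, e⟫ ≥ σ*‖e‖^2) (h2 : ⟪g, d⟫ ≥ (1/β)*‖g‖^2) :
    ‖(2:ℝ)•e - (d - g) + (1-φ)•(d+g)‖ ≤ φ*‖d+g‖ := by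
  have expandL : ‖(2:ℝ)•e - (d - g) + (1-φ)•(d+g)‖^2
      = 4*‖e‖^2 + φ^2*‖d‖^2 + (2-φ)^2*‖g‖^2 - 4*φ*⟪e,d⟫ + 4*(2-φ)*⟪e,g⟫
        - 2*φ*(2-φ)*⟪d,g⟫ := by
    simp only [← real_inner_self_eq_norm_sq, inner_add_left, inner_add_right,
      inner_sub_left, inner_sub_right, real_inner_smul_left, real_inner_smul_right,
      real_inner_comm d e, real_inner_comm g e, real_inner_comm g d]
    ring
  have expandR : ‖d + g‖^2 = ‖d‖^2 + 2*⟪d,g⟫ + ‖g‖^2 := norm_add_sq_real d g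
  have h1' : ⟪e,d⟫ - ⟪e,g⟫ - ‖e‖^2 ≥ σ*‖e‖^2 := by
    have := h1
    simp only [← real_inner_self_eq_norm_sq, inner_sub_left,
      real_inner_comm d e, real_inner_comm g e] at this ⊢
    linarith [this]
  have h2' : ‖g‖^2 ≤ β*⟪d,g⟫ := by
    rw [real_inner_comm]
    rw [ge_iff_le, div_mul_eq_mul_div, one_mul, div_le_iff₀ hβ] at h2
    linarith [h2]
  have h3 : ⟪e,g⟫ ≤ ‖e‖*‖g‖ := real_inner_le_norm e g
  have hsq : ‖(2:ℝ)•e - (d - g) + (1-φ)•(d+g)‖^2 ≤ (φ*‖d+g‖)^2 := by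
    rw [expandL, mul_pow, expandR]
    exact scalar_key σ β φ (‖e‖^2) (‖d‖^2) (‖g‖^2) ⟪e,d⟫ ⟪e,g⟫ ⟪d,g⟫ ‖e‖ ‖g‖
      hσ hβ e1 e2 rfl rfl (norm_nonneg _) (norm_nonneg _) h1' h2' h3
  have hnn : 0 ≤ φ*‖d+g‖ := by positivity
  nlinarith [norm_nonneg ((2:ℝ)•e - (d - g) + (1-φ)•(d+g)), hsq, hnn]

theorem composition_reflected_resolvents_neg_averaged
    {H : Type*} [NormedAddCommGroup H] [InnerProductSpace ℝ H]
    (σ β : ℝ) (hσ : 0 < σ) (hβ : 0 < β)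
    (A : H → Set H) (JA : H → H) (B JB : H → H)
    (hA : ∀ x y u v : H, u ∈ A x → v ∈ A y → ⟪u - v, x - y⟫ ≥ σ * ‖x - y‖ ^ 2)
    (hJA : ∀ x : H, x - JA x ∈ A (JA x))
    (hB : ∀ x y : H, ⟪B x - B y, x - y⟫ ≥ (1 / β) * ‖B x - B y‖ ^ 2)
    (hJB : ∀ x : H, JB x + B (JB x) = x) :
    ∃ N : H → H, (∀ x y : H, ‖N x - N y‖ ≤ ‖x - y‖) ∧
      ∀ x : H,
        (2 : ℝ) • JA ((2 : ℝ) • JB x - x) - ((2 : ℝ) • JB x - x) =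
          ((1 / σ + β) / (1 + 1 / σ + β) - 1) • x
          + ((1 / σ + β) / (1 + 1 / σ + β)) • N x := by
  set φ : ℝ := (1/σ + β)/(1 + 1/σ + β) with hφdef
  have hD : 0 < 1 + 1/σ + β := by positivity
  have hφ : 0 < φ := by rw [hφdef]; positivity
  have e2 : (1+σ+σ*β)*φ = 1+σ*β := by
    rw [hφdef]; field_simp; ring
  have e1 : (1+σ+σ*β)*(1-φ) = σ := by
    have : (1+σ+σ*β)*(1-φ) = (1+σ+σ*β) - (1+σ+σ*β)*φ := by ring
    rw [this, e2]; ring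
  set T : H → H := fun x => (2:ℝ) • JA ((2:ℝ) • JB x - x) - ((2:ℝ) • JB x - x)
    with hT
  refine ⟨fun x => φ⁻¹ • (T x + (1-φ) • x), ?_, ?_⟩
  · intro x y
    set p := JB x with hp
    set q := JB y with hq
    have hx : p + B p = x := hJB x
    have hy : q + B q = y := hJB y
    have hrx : (2:ℝ) • p - x = p - B p := by
      rw [show p - B p = (2:ℝ) • p - (p + B p) from by module, hx]
    have hry : (2:ℝ) • q - y = q - B q := by
      rw [show q - B q = (2:ℝ) • q - (q + B q) from by module, hy]
    set e := JA (p - B p) - JA (q - B q) with he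
    set d := p - q with hd
    set g := B p - B q with hg
    have h1 : ⟪(d - g) - e, e⟫ ≥ σ*‖e‖^2 := by
      have := hA (JA (p - B p)) (JA (q - B q)) _ _ (hJA (p - B p)) (hJA (q - B q))
      have hveq : (p - B p - JA (p - B p)) - (q - B q - JA (q - B q)) = (d - g) - e := by
        rw [he, hd, hg]; module
      rwa [hveq] at this
    have h2 : ⟪g, d⟫ ≥ (1/β)*‖g‖^2 := hB p q
    have hxy : x - y = d + g := by
      rw [hd, hg, show (p - q) + (B p - B q) = (p + B p) - (q + B q) from by module,
        hx, hy]
    have hdiff : T x - T y + (1-φ) • (x - y) = (2:ℝ)•e - (d - g) + (1-φ)•(d+g) := by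
      rw [hT]
      simp only [← hp, ← hq, hrx, hry]
      rw [hxy, he, hd, hg]
      module
    have key := vec_key σ β φ hσ hβ e1 e2 hφ e d g h1 h2
    rw [← hdiff, ← hxy] at key
    have heq : φ⁻¹ • (T x + (1-φ) • x) - φ⁻¹ • (T y + (1-φ) • y)
        = φ⁻¹ • (T x - T y + (1-φ) • (x - y)) := by module
    rw [heq, norm_smul, Real.norm_eq_abs, abs_of_pos (inv_pos.2 hφ)]
    calc φ⁻¹ * ‖T x - T y + (1-φ) • (x - y)‖ ≤ φ⁻¹ * (φ * ‖x - y‖) :=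
          mul_le_mul_of_nonneg_left key (by positivity)
      _ = ‖x - y‖ := by field_simp
  · intro x
    show T x = (φ - 1) • x + φ • (φ⁻¹ • (T x + (1-φ) • x))
    rw [smul_smul, mul_inv_cancel₀ hφ.ne', one_smul]
    module
end

section
/- Let H be a real Hilbert space, A : H → 2^H maximally monotone and σ-strongly monotone, B : H → H (1/β)-cocoercive, γ > 0, α ∈ (0,1). Then the Douglas–Rachford map T = (1−α)Id + α R_{γA} R_{γB} is Lipschitz with constant |1 − 2α + α·k/(1+k)| + α·k/(1+k) < 1, where k = 1/(γσ) + γβ. -/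
open RealInnerProductSpace

private lemma norm_comb_sq {H : Type*} [NormedAddCommGroup H] [InnerProductSpace ℝ H]
    (w e f : H) (A B C : ℝ) :
    ‖A • w + B • e + C • f‖ ^ 2 =
      A ^ 2 * ‖w‖ ^ 2 + B ^ 2 * ‖e‖ ^ 2 + C ^ 2 * ‖f‖ ^ 2
      + 2 * A * B * ⟪w, e⟫ + 2 * A * C * ⟪w, f⟫ + 2 * B * C * ⟪e, f⟫ := by
  have h : ∀ v : H, ‖v‖ ^ 2 = ⟪v, v⟫ := fun v => (real_inner_self_eq_norm_sq v).symm
  rw [h, h, h, h]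
  simp only [inner_add_left, inner_add_right, real_inner_smul_left, real_inner_smul_right,
    real_inner_comm e w, real_inner_comm f w, real_inner_comm f e]
  ring

private lemma scalar_key_s11 (c₁ c₂ t aa W E F p q r : ℝ) (hc₁ : 0 < c₁) (hc₂ : 0 < c₂)
    (ht : t = (c₁ + c₂) / (c₁ + c₂ + c₁ * c₂))
    (haa : aa = c₁ ^ 2 / (c₁ + c₂ + c₁ * c₂))
    (hB : c₂ * E ≤ p)
    (hA : c₁ * (W + E + F - 2 * p - 2 * q + 2 * r) ≤ q - r - F)
    (hS : 0 ≤ aa ^ 2 * (W + F - 2 * q) + t ^ 2 * c₁ ^ 2 * E - 2 * aa * t * c₁ * (p - r)) :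
    (2 - t) ^ 2 * W + t ^ 2 * E + 4 * F - 2 * t * (2 - t) * p - 4 * (2 - t) * q + 4 * t * r
      ≤ t ^ 2 * (W + E + 2 * p) := by
  have hden : 0 < c₁ + c₂ + c₁ * c₂ := by positivity
  have ha0 : 0 < aa := by rw [haa]; positivity
  have ht0 : 0 < t := by rw [ht]; positivity
  have key : aa * (t ^ 2 * (W + E + 2 * p)
      - ((2 - t) ^ 2 * W + t ^ 2 * E + 4 * F - 2 * t * (2 - t) * p - 4 * (2 - t) * q + 4 * t * r))
      = 4 * t * aa * (p - c₂ * E)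
        + 4 * t * aa * ((q - r - F) - c₁ * (W + E + F - 2 * p - 2 * q + 2 * r))
        + 4 * (aa ^ 2 * (W + F - 2 * q) + t ^ 2 * c₁ ^ 2 * E - 2 * aa * t * c₁ * (p - r)) := by
    subst ht haa
    field_simp
    ring
  have h1 : 0 ≤ 4 * t * aa * (p - c₂ * E) :=
    mul_nonneg (by positivity) (by linarith)
  have h2 : 0 ≤ 4 * t * aa * ((q - r - F) - c₁ * (W + E + F - 2 * p - 2 * q + 2 * r)) :=
    mul_nonneg (by positivity) (by linarith)
  nlinarith [key, h1, h2, hS, ha0]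

private lemma key_norm {H : Type*} [NormedAddCommGroup H] [InnerProductSpace ℝ H]
    (c₁ c₂ t aa : ℝ) (hc₁ : 0 < c₁) (hc₂ : 0 < c₂)
    (ht : t = (c₁ + c₂) / (c₁ + c₂ + c₁ * c₂))
    (haa : aa = c₁ ^ 2 / (c₁ + c₂ + c₁ * c₂))
    (w e f z : H)
    (hz : z = w - e - f)
    (hBc : c₂ * ‖e‖ ^ 2 ≤ ⟪w, e⟫)
    (hAc : c₁ * ‖z‖ ^ 2 ≤ ⟪z, f⟫) :
    ‖(z - f) + (1 - t) • (w + e)‖ ≤ t * ‖w + e‖ := by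
  have hden : 0 < c₁ + c₂ + c₁ * c₂ := by positivity
  have ht0 : 0 < t := by rw [ht]; positivity
  -- scalar abbreviations
  have hzc : z = (1 : ℝ) • w + (-1 : ℝ) • e + (-1 : ℝ) • f := by rw [hz]; module
  have hzsq : ‖z‖ ^ 2 = ‖w‖ ^ 2 + ‖e‖ ^ 2 + ‖f‖ ^ 2
      - 2 * ⟪w, e⟫ - 2 * ⟪w, f⟫ + 2 * ⟪e, f⟫ := by
    rw [hzc, norm_comb_sq]; ring
  have hzfi : ⟪z, f⟫ = ⟪w, f⟫ - ⟪e, f⟫ - ‖f‖ ^ 2 := by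
    rw [hz]
    simp only [inner_sub_left]
    rw [real_inner_self_eq_norm_sq]
  have hA' : c₁ * (‖w‖ ^ 2 + ‖e‖ ^ 2 + ‖f‖ ^ 2 - 2 * ⟪w, e⟫ - 2 * ⟪w, f⟫ + 2 * ⟪e, f⟫)
      ≤ ⟪w, f⟫ - ⟪e, f⟫ - ‖f‖ ^ 2 := by
    rw [← hzsq, ← hzfi]; exact hAc
  have hnn : (0 : ℝ) ≤ ‖aa • w + (-(t * c₁)) • e + (-aa) • f‖ ^ 2 := by positivity
  rw [norm_comb_sq] at hnn
  have hS : 0 ≤ aa ^ 2 * (‖w‖ ^ 2 + ‖f‖ ^ 2 - 2 * ⟪w, f⟫) + t ^ 2 * c₁ ^ 2 * ‖e‖ ^ 2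
      - 2 * aa * t * c₁ * (⟪w, e⟫ - ⟪e, f⟫) := le_of_le_of_eq hnn (by ring)
  have hkey := scalar_key_s11 c₁ c₂ t aa (‖w‖ ^ 2) (‖e‖ ^ 2) (‖f‖ ^ 2)
    (⟪w, e⟫) (⟪w, f⟫) (⟪e, f⟫) hc₁ hc₂ ht haa hBc hA' hS
  have hG : (z - f) + (1 - t) • (w + e) = (2 - t) • w + (-t) • e + (-2 : ℝ) • f := by
    rw [hz]; module
  have hDsq : ‖w + e‖ ^ 2 = ‖w‖ ^ 2 + 2 * ⟪w, e⟫ + ‖e‖ ^ 2 := norm_add_sq_real w e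
  have hsq : ‖(z - f) + (1 - t) • (w + e)‖ ^ 2 ≤ (t * ‖w + e‖) ^ 2 := by
    rw [hG, norm_comb_sq, mul_pow, hDsq]
    nlinarith [hkey]
  have h2 := (pow_le_pow_iff_left₀ (norm_nonneg _) (by positivity) two_ne_zero).mp hsq
  exact h2

theorem douglas_rachford_contraction
    {H : Type*} [NormedAddCommGroup H] [InnerProductSpace ℝ H]
    (σ β γ α : ℝ) (hσ : 0 < σ) (hβ : 0 < β) (hγ : 0 < γ)
    (hα0 : 0 < α) (hα1 : α < 1)
    (A : H → Set H) (JA : H → H) (B JB : H → H) (T : H → H)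
    (hA : ∀ x y u v : H, u ∈ A x → v ∈ A y → ⟪u - v, x - y⟫ ≥ σ * ‖x - y‖ ^ 2)
    (hJA : ∀ x : H, ∃ u ∈ A (JA x), JA x + γ • u = x)
    (hB : ∀ x y : H, ⟪B x - B y, x - y⟫ ≥ (1 / β) * ‖B x - B y‖ ^ 2)
    (hJB : ∀ x : H, JB x + γ • B (JB x) = x)
    (hT : ∀ x : H, T x = (1 - α) • x +
      α • ((2 : ℝ) • JA ((2 : ℝ) • JB x - x) - ((2 : ℝ) • JB x - x))) :
    (∀ x y : H, ‖T x - T y‖ ≤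
      (|1 - 2 * α + α * ((1 / (γ * σ) + γ * β) / (1 + (1 / (γ * σ) + γ * β)))|
        + α * ((1 / (γ * σ) + γ * β) / (1 + (1 / (γ * σ) + γ * β)))) * ‖x - y‖) ∧
    |1 - 2 * α + α * ((1 / (γ * σ) + γ * β) / (1 + (1 / (γ * σ) + γ * β)))|
      + α * ((1 / (γ * σ) + γ * β) / (1 + (1 / (γ * σ) + γ * β))) < 1 := by
  have hγσ : 0 < γ * σ := mul_pos hγ hσ
  have hγβ : 0 < γ * β := mul_pos hγ hβ
  obtain ⟨t, htdef⟩ : ∃ t : ℝ,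
      (1 / (γ * σ) + γ * β) / (1 + (1 / (γ * σ) + γ * β)) = t := ⟨_, rfl⟩
  rw [htdef]
  have htval : t = ((γ * σ) + 1 / (γ * β)) / ((γ * σ) + 1 / (γ * β) + (γ * σ) * (1 / (γ * β))) := by
    rw [← htdef]
    rw [div_eq_div_iff (by positivity) (by positivity)]
    field_simp
    ring
  have ht0 : 0 < t := by rw [htval]; positivity
  have ht1 : t < 1 := by
    rw [htval, div_lt_one (by positivity)]
    have : 0 < (γ * σ) * (1 / (γ * β)) := by positivity
    linarith
  constructor
  · intro x y
    obtain ⟨a1, ha1A, ha1⟩ := hJA ((2 : ℝ) • JB x - x)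
    obtain ⟨a2, ha2A, ha2⟩ := hJA ((2 : ℝ) • JB y - y)
    set w : H := JB x - JB y with hw
    set e : H := γ • (B (JB x) - B (JB y)) with he
    set f : H := γ • (a1 - a2) with hf
    set z : H := JA ((2 : ℝ) • JB x - x) - JA ((2 : ℝ) • JB y - y) with hzdef
    have hxy : x - y = w + e := by
      conv_lhs => rw [← hJB x, ← hJB y]
      rw [hw, he]
      module
    have hs : ((2 : ℝ) • JB x - x) - ((2 : ℝ) • JB y - y) = w - e := by
      have h1 : ((2 : ℝ) • JB x - x) - ((2 : ℝ) • JB y - y) = (2 : ℝ) • w - (x - y) := by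
        rw [hw]; module
      rw [h1, hxy]; module
    have hzf : z + f = w - e := by
      have h1 : z + f = (JA ((2 : ℝ) • JB x - x) + γ • a1)
          - (JA ((2 : ℝ) • JB y - y) + γ • a2) := by
        rw [hzdef, hf]; module
      rw [h1, ha1, ha2, hs]
    have hz : z = w - e - f := by rw [← hzf]; abel
    -- cocoercivity bound
    have hBc : (1 / (γ * β)) * ‖e‖ ^ 2 ≤ ⟪w, e⟫ := by
      have hb := hB (JB x) (JB y)
      have h1 : ⟪w, e⟫ = γ * ⟪B (JB x) - B (JB y), w⟫ := by
        rw [he, real_inner_smul_right, real_inner_comm]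
      have h2 : ‖e‖ ^ 2 = γ ^ 2 * ‖B (JB x) - B (JB y)‖ ^ 2 := by
        rw [he, norm_smul, mul_pow, Real.norm_eq_abs, sq_abs]
      rw [h1, h2]
      calc (1 / (γ * β)) * (γ ^ 2 * ‖B (JB x) - B (JB y)‖ ^ 2)
          = γ * ((1 / β) * ‖B (JB x) - B (JB y)‖ ^ 2) := by
            field_simp
        _ ≤ γ * ⟪B (JB x) - B (JB y), w⟫ :=
            mul_le_mul_of_nonneg_left hb hγ.le
    -- strong monotonicity bound
    have hAc : (γ * σ) * ‖z‖ ^ 2 ≤ ⟪z, f⟫ := by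
      have hb := hA (JA ((2 : ℝ) • JB x - x)) (JA ((2 : ℝ) • JB y - y)) a1 a2 ha1A ha2A
      have h1 : ⟪z, f⟫ = γ * ⟪a1 - a2, z⟫ := by
        rw [hf, real_inner_smul_right, real_inner_comm]
      rw [h1, mul_assoc]
      exact mul_le_mul_of_nonneg_left hb hγ.le
    have htval' : t = ((γ * σ) + 1 / (γ * β))
        / ((γ * σ) + 1 / (γ * β) + (γ * σ) * (1 / (γ * β))) := htval
    have hkey := key_norm (γ * σ) (1 / (γ * β)) t
      ((γ * σ) ^ 2 / ((γ * σ) + 1 / (γ * β) + (γ * σ) * (1 / (γ * β))))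
      hγσ (by positivity) htval' rfl w e f z hz hBc hAc
    have hkey' : ‖(z - f) + (1 - t) • (x - y)‖ ≤ t * ‖x - y‖ := by
      rw [hxy]; exact hkey
    have hRR : ((2 : ℝ) • JA ((2 : ℝ) • JB x - x) - ((2 : ℝ) • JB x - x))
        - ((2 : ℝ) • JA ((2 : ℝ) • JB y - y) - ((2 : ℝ) • JB y - y)) = z - f := by
      have h1 : ((2 : ℝ) • JA ((2 : ℝ) • JB x - x) - ((2 : ℝ) • JB x - x))
          - ((2 : ℝ) • JA ((2 : ℝ) • JB y - y) - ((2 : ℝ) • JB y - y))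
          = (2 : ℝ) • z - (((2 : ℝ) • JB x - x) - ((2 : ℝ) • JB y - y)) := by
        rw [hzdef]; module
      rw [h1, hs, ← hzf]; module
    have hTd : T x - T y = (1 - 2 * α + α * t) • (x - y)
        + α • ((z - f) + (1 - t) • (x - y)) := by
      calc T x - T y
          = (1 - α) • (x - y) + α • (((2 : ℝ) • JA ((2 : ℝ) • JB x - x) - ((2 : ℝ) • JB x - x))
            - ((2 : ℝ) • JA ((2 : ℝ) • JB y - y) - ((2 : ℝ) • JB y - y))) := by
            rw [hT x, hT y]; module
        _ = (1 - α) • (x - y) + α • (z - f) := by rw [hRR]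
        _ = (1 - 2 * α + α * t) • (x - y) + α • ((z - f) + (1 - t) • (x - y)) := by module
    calc ‖T x - T y‖
        = ‖(1 - 2 * α + α * t) • (x - y) + α • ((z - f) + (1 - t) • (x - y))‖ := by rw [hTd]
      _ ≤ ‖(1 - 2 * α + α * t) • (x - y)‖ + ‖α • ((z - f) + (1 - t) • (x - y))‖ :=
          norm_add_le _ _
      _ = |1 - 2 * α + α * t| * ‖x - y‖ + α * ‖(z - f) + (1 - t) • (x - y)‖ := by
          rw [norm_smul, norm_smul, Real.norm_eq_abs, Real.norm_eq_abs, abs_of_pos hα0]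
      _ ≤ |1 - 2 * α + α * t| * ‖x - y‖ + α * (t * ‖x - y‖) := by
          have := mul_le_mul_of_nonneg_left hkey' hα0.le
          linarith
      _ = (|1 - 2 * α + α * t| + α * t) * ‖x - y‖ := by ring
  · rcases abs_cases (1 - 2 * α + α * t) with ⟨h1, h2⟩ | ⟨h1, h2⟩ <;>
      nlinarith [mul_pos hα0 ht0, mul_lt_mul_of_pos_left ht1 hα0]
end

section
/- For σ, β > 0, the function γ ↦ 1/(γσ) + γβ on (0,∞) is minimized at γ = 1/√(βσ) with minimum value 2√(β/σ); consequently, the Douglas–Rachford contraction bound (|1−2α+αk/(1+k)| + αk/(1+k) with k = 1/(γσ)+γβ), optimized over γ > 0 and α ∈ (0,1), equals √(β/σ)/(√(β/σ)+1), attained at γ = 1/√(βσ) and α = (√(β/σ)+1/2)/(1+√(β/σ)). -/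
/-!
By AM-GM, `k(γ) = 1/(γσ) + γβ ≥ 2√(β/σ)`, with equality at `γ = 1/√(βσ)`. For fixed `k ≥ 0`,
writing `c = k/(2+k)` and `u = α(2+k)/(1+k)`, the contraction bound is `|1 - u| + c u`, which for
`|c| ≤ 1` is at least `c`, with equality at `u = 1`. Since `k ↦ k/(2+k)` is increasing, the
optimum is `2√(β/σ) / (2 + 2√(β/σ)) = √(β/σ)/(√(β/σ)+1)`.
-/

open Real

noncomputable def drContraction (α k : ℝ) : ℝ :=
  |1 - 2 * α + α * (k / (1 + k))| + α * (k / (1 + k))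

lemma two_sqrt_div_le_inv_mul_add_mul {σ β γ : ℝ} (hσ : 0 ≤ σ) (hβ : 0 ≤ β) (hγ : 0 < γ) :
    2 * √(β / σ) ≤ 1 / (γ * σ) + γ * β := by
  have hx : 0 ≤ 1 / (γ * σ) := by positivity
  have hy : 0 ≤ γ * β := by positivity
  have hprod : √(1 / (γ * σ)) * √(γ * β) = √(β / σ) := by
    rw [← sqrt_mul hx]
    congr 1
    field_simp
  calc 2 * √(β / σ) = 2 * √(1 / (γ * σ)) * √(γ * β) := by rw [mul_assoc, hprod]
    _ ≤ √(1 / (γ * σ)) ^ 2 + √(γ * β) ^ 2 := two_mul_le_add_sq _ _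
    _ = 1 / (γ * σ) + γ * β := by rw [sq_sqrt hx, sq_sqrt hy]

lemma inv_mul_add_mul_at_inv_sqrt {σ β : ℝ} (hσ : 0 < σ) (hβ : 0 < β) :
    1 / ((1 / √(β * σ)) * σ) + (1 / √(β * σ)) * β = 2 * √(β / σ) := by
  have hβ' : 0 < √β := sqrt_pos.mpr hβ
  have hσ' : 0 < √σ := sqrt_pos.mpr hσ
  rw [sqrt_mul hβ.le, sqrt_div hβ.le]
  field_simp
  linear_combination (√σ ^ 2 - 2 * σ) * sq_sqrt hβ.le + β * sq_sqrt hσ.le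

lemma le_abs_one_sub_add_mul {c : ℝ} (hc : |c| ≤ 1) (u : ℝ) : c ≤ |1 - u| + c * u := by
  obtain ⟨hc₀, hc₁⟩ := abs_le.mp hc
  rcases le_total u 1 with hu | hu
  · nlinarith [le_abs_self (1 - u)]
  · nlinarith [neg_abs_le (1 - u)]

lemma div_two_add_le_drContraction {k : ℝ} (hk : 0 ≤ k) (α : ℝ) :
    k / (2 + k) ≤ drContraction α k := by
  have hc : |k / (2 + k)| ≤ 1 := by
    rw [abs_of_nonneg (by positivity), div_le_one (by positivity)]
    linarith
  have h1k : 1 + k ≠ 0 := by positivity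
  have h2k : 2 + k ≠ 0 := by positivity
  have hu : 1 - 2 * α + α * (k / (1 + k)) = 1 - α * (2 + k) / (1 + k) := by
    field_simp
    ring
  have hcu : α * (k / (1 + k)) = k / (2 + k) * (α * (2 + k) / (1 + k)) := by
    field_simp
  rw [drContraction, hu, hcu]
  exact le_abs_one_sub_add_mul hc _

lemma drContraction_at_minimizer {k : ℝ} (hk : 0 ≤ k) :
    drContraction ((1 + k) / (2 + k)) k = k / (2 + k) := by
  have hzero : 1 - 2 * ((1 + k) / (2 + k)) + (1 + k) / (2 + k) * (k / (1 + k)) = 0 := by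
    field_simp
    ring
  rw [drContraction, hzero, abs_zero, zero_add]
  field_simp

lemma div_add_one_le_div_two_add {s k : ℝ} (hs : 0 ≤ s) (hk : 2 * s ≤ k) :
    s / (s + 1) ≤ k / (2 + k) := by
  rw [div_le_div_iff₀ (by linarith) (by linarith)]
  linarith

theorem optimal_DR_parameters (σ β : ℝ) (hσ : 0 < σ) (hβ : 0 < β) :
    (∀ γ : ℝ, 0 < γ → 2 * Real.sqrt (β / σ) ≤ 1 / (γ * σ) + γ * β) ∧
    (1 / ((1 / Real.sqrt (β * σ)) * σ) + (1 / Real.sqrt (β * σ)) * β =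
      2 * Real.sqrt (β / σ)) ∧
    (∀ γ α : ℝ, 0 < γ → 0 < α → α < 1 →
      Real.sqrt (β / σ) / (Real.sqrt (β / σ) + 1) ≤
        |1 - 2 * α + α * ((1 / (γ * σ) + γ * β) / (1 + (1 / (γ * σ) + γ * β)))|
          + α * ((1 / (γ * σ) + γ * β) / (1 + (1 / (γ * σ) + γ * β)))) ∧
    (let γ := 1 / Real.sqrt (β * σ);
     let α := (Real.sqrt (β / σ) + 1 / 2) / (1 + Real.sqrt (β / σ));
     |1 - 2 * α + α * ((1 / (γ * σ) + γ * β) / (1 + (1 / (γ * σ) + γ * β)))|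
       + α * ((1 / (γ * σ) + γ * β) / (1 + (1 / (γ * σ) + γ * β))) =
       Real.sqrt (β / σ) / (Real.sqrt (β / σ) + 1)) := by
  set s := √(β / σ)
  have hs : 0 ≤ s := sqrt_nonneg _
  have hk_ge : ∀ γ : ℝ, 0 < γ → 2 * s ≤ 1 / (γ * σ) + γ * β := fun γ hγ =>
    two_sqrt_div_le_inv_mul_add_mul hσ.le hβ.le hγ
  have hk_opt := inv_mul_add_mul_at_inv_sqrt hσ hβ
  refine ⟨hk_ge, hk_opt, fun γ α hγ _ _ => ?_, ?_⟩
  · have hk := hk_ge γ hγ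
    exact (div_add_one_le_div_two_add hs hk).trans
      (div_two_add_le_drContraction (by linarith) α)
  · have hα : (s + 1 / 2) / (1 + s) = (1 + 2 * s) / (2 + 2 * s) := by
      field_simp
      ring
    have hvalue : (2 * s) / (2 + 2 * s) = s / (s + 1) := by
      field_simp
      ring
    show drContraction _ _ = _
    rw [hk_opt, hα, drContraction_at_minimizer (by linarith), hvalue]
end

section
/- For 0 < σ ≤ β, the function h(γ) = 1 − 4γσ/(1 + 2γσ + (γβ)²) on (0,∞) is minimized at γ = 1/β, and the minimum value is (β/σ − 1)/(β/σ + 1); equivalently the optimal contraction factor √h(γ) equals √((β−σ)/(β+σ)). -/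
/-!
Writing `h γ = 1 - 4γσ / (1 + 2γσ + (γβ)²)`, one computes `h (1/β) = 1 - 2σ / (β + σ)`.
After clearing denominators, `h (1/β) ≤ h γ` becomes `2γβ ≤ 1 + (γβ)²`, i.e. `(γβ - 1)² ≥ 0`.
-/

noncomputable def reflectedResolventContractionSq (σ β γ : ℝ) : ℝ :=
  1 - 4 * γ * σ / (1 + 2 * γ * σ + (γ * β) ^ 2)

namespace reflectedResolventContractionSq

variable {σ β : ℝ}

theorem one_div_eq (hβ : β ≠ 0) (hβσ : β + σ ≠ 0) :
    reflectedResolventContractionSq σ β (1 / β) = 1 - 2 * σ / (β + σ) := by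
  have hden : 1 + 2 * (1 / β) * σ + (1 / β * β) ^ 2 = 2 * (β + σ) / β := by
    field_simp
    ring
  rw [reflectedResolventContractionSq, hden]
  field_simp
  ring

theorem one_div_le (hσ : 0 ≤ σ) (hβ : 0 < β) {γ : ℝ} (hγ : 0 ≤ γ) :
    reflectedResolventContractionSq σ β (1 / β) ≤ reflectedResolventContractionSq σ β γ := by
  have hβσ : 0 < β + σ := by positivity
  rw [one_div_eq hβ.ne' hβσ.ne', reflectedResolventContractionSq,
    sub_le_sub_iff_left, div_le_div_iff₀ (by positivity) hβσ]
  nlinarith [mul_nonneg hσ (sq_nonneg (γ * β - 1))]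

end reflectedResolventContractionSq

theorem one_sub_two_mul_div_add_eq {σ β : ℝ} (hσ : σ ≠ 0) (hβσ : β + σ ≠ 0) :
    1 - 2 * σ / (β + σ) = (β / σ - 1) / (β / σ + 1) := by
  rw [div_sub_one hσ, div_add_one hσ, div_div_div_cancel_right₀ hσ]
  field_simp
  ring

theorem optimal_gamma_sm_lipschitz (σ β : ℝ) (hσ : 0 < σ) (hσβ : σ ≤ β) :
    (∀ γ : ℝ, 0 < γ →
      1 - 4 * (1 / β) * σ / (1 + 2 * (1 / β) * σ + ((1 / β) * β) ^ 2) ≤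
        1 - 4 * γ * σ / (1 + 2 * γ * σ + (γ * β) ^ 2)) ∧
    (1 - 4 * (1 / β) * σ / (1 + 2 * (1 / β) * σ + ((1 / β) * β) ^ 2) =
      (β / σ - 1) / (β / σ + 1)) ∧
    (Real.sqrt (1 - 4 * (1 / β) * σ / (1 + 2 * (1 / β) * σ + ((1 / β) * β) ^ 2)) =
      Real.sqrt ((β - σ) / (β + σ))) := by
  have hβ : 0 < β := hσ.trans_le hσβ
  have hβσ : β + σ ≠ 0 := by positivity
  have hvalue := reflectedResolventContractionSq.one_div_eq hβ.ne' hβσ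
  unfold reflectedResolventContractionSq at hvalue
  refine ⟨fun γ hγ => reflectedResolventContractionSq.one_div_le hσ.le hβ hγ.le, ?_, ?_⟩
  · rw [hvalue, one_sub_two_mul_div_add_eq hσ.ne' hβσ]
  · rw [hvalue]
    congr 1
    field_simp
    ring
end

section
/- Let A = d·[[cos ψ, −sin ψ], [sin ψ, cos ψ]] on ℝ² with d > 0, 0 ≤ ψ < π/2, and set σ = d cos ψ, β = d. For γ > 0, the reflected resolvent R_{γA} = 2(I + γA)^{-1} − I equals √(1 − 4γσ/(1 + 2γσ + (γβ)²)) times a rotation matrix; in particular ‖R_{γA}z‖ = √(1 − 4γσ/(1+2γσ+(γβ)²)) · ‖z‖ for all z ∈ ℝ², so the contraction bound √(1 − 4γσ/(1+2γσ+(γβ)²)) is attained exactly. -/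
/-!
Identify `ℝ²` with `ℂ` through `(x₀, x₁) ↦ x₀ + x₁ i`. Then `A` is multiplication by
`w = d e^{iψ}`, the resolvent equation forces `1 + γw ≠ 0` and `J = (1 + γw)⁻¹`, so the reflected
resolvent `2J - I` is multiplication by the Cayley transform `ζ = (1 - γw) / (1 + γw)`.
The polar form `ζ = |ζ| e^{i arg ζ}` exhibits it as a scaled rotation, and
`|1 - γw|² = |1 + γw|² - 4γ Re w` gives `|ζ|² = 1 - 4γσ / (1 + 2γσ + (γβ)²)`.
-/

open RealInnerProductSpace Real

open Complex

theorem two_mul_sub_eq_div_mul_of_forall_mul_eq {K : Type*} [Field K] {a : K} {j : K → K}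
    (h : ∀ x, a * j x = x) (x : K) : 2 * j x - x = (2 - a) / a * x := by
  have ha : a ≠ 0 := left_ne_zero_of_mul_eq_one (h 1)
  rw [eq_div_of_mul_eq ha ((mul_comm _ _).trans (h x))]
  field_simp

theorem Complex.norm_one_sub_div_one_add {z : ℂ} (hz : 1 + z ≠ 0) :
    ‖(1 - z) / (1 + z)‖ = √(1 - 4 * z.re / normSq (1 + z)) := by
  have hpos : 0 < normSq (1 + z) := normSq_pos.2 hz
  have hsub : normSq (1 - z) = normSq (1 + z) - 4 * z.re := by
    simp only [normSq_apply, add_re, sub_re, add_im, sub_im, one_re, one_im]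
    ring
  rw [norm_div, norm_def, norm_def, ← sqrt_div' _ (normSq_nonneg _), hsub]
  congr 1
  field_simp

theorem Complex.orthonormalBasisOneI_repr_mul_repr_symm (w : ℂ) (v : EuclideanSpace ℝ (Fin 2)) :
    orthonormalBasisOneI.repr (w * orthonormalBasisOneI.repr.symm v) =
      (WithLp.equiv 2 (Fin 2 → ℝ)).symm
        ![w.re * v 0 - w.im * v 1, w.im * v 0 + w.re * v 1] := by
  ext i
  fin_cases i <;> simp [orthonormalBasisOneI_repr_apply, orthonormalBasisOneI_repr_symm_apply]
  ring

theorem Complex.norm_orthonormalBasisOneI_repr_mul (ζ : ℂ) (v : EuclideanSpace ℝ (Fin 2)) :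
    ‖orthonormalBasisOneI.repr (ζ * orthonormalBasisOneI.repr.symm v)‖ = ‖ζ‖ * ‖v‖ := by
  rw [LinearIsometryEquiv.norm_map, norm_mul, LinearIsometryEquiv.norm_map]

theorem Complex.exists_orthonormalBasisOneI_repr_mul_eq_norm_smul_rotation (ζ : ℂ) :
    ∃ c s : ℝ, c ^ 2 + s ^ 2 = 1 ∧ ∀ v : EuclideanSpace ℝ (Fin 2),
      orthonormalBasisOneI.repr (ζ * orthonormalBasisOneI.repr.symm v) =
        ‖ζ‖ • (WithLp.equiv 2 (Fin 2 → ℝ)).symm ![c * v 0 + s * v 1, -s * v 0 + c * v 1] := by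
  refine ⟨Real.cos (arg ζ), -Real.sin (arg ζ), by simp, fun v => ?_⟩
  conv_lhs => rw [← norm_mul_exp_arg_mul_I ζ, mul_assoc, ← real_smul, map_smul,
    orthonormalBasisOneI_repr_mul_repr_symm, exp_ofReal_mul_I_re, exp_ofReal_mul_I_im]
  simp only [neg_mul, neg_neg, sub_eq_add_neg]

theorem reflected_resolvent_eq_cayley_mul (γ : ℝ) (w : ℂ)
    (A J : EuclideanSpace ℝ (Fin 2) → EuclideanSpace ℝ (Fin 2))
    (hA : ∀ v, A v = orthonormalBasisOneI.repr (w * orthonormalBasisOneI.repr.symm v))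
    (hJ : ∀ x, J x + γ • A (J x) = x) :
    1 + γ * w ≠ 0 ∧ ∀ z, (2 : ℝ) • J z - z =
      orthonormalBasisOneI.repr ((1 - γ * w) / (1 + γ * w) * orthonormalBasisOneI.repr.symm z) := by
  have hj (x : ℂ) : (1 + γ * w) * orthonormalBasisOneI.repr.symm (J (orthonormalBasisOneI.repr x))
      = x := by
    have := congrArg orthonormalBasisOneI.repr.symm (hJ (orthonormalBasisOneI.repr x))
    rw [map_add, map_smul, hA, LinearIsometryEquiv.symm_apply_apply,
      LinearIsometryEquiv.symm_apply_apply, real_smul] at this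
    linear_combination this
  refine ⟨left_ne_zero_of_mul_eq_one (hj 1), fun z => ?_⟩
  have hz := two_mul_sub_eq_div_mul_of_forall_mul_eq hj (orthonormalBasisOneI.repr.symm z)
  rw [LinearIsometryEquiv.apply_symm_apply] at hz
  apply orthonormalBasisOneI.repr.symm.injective
  rw [LinearIsometryEquiv.symm_apply_apply, map_sub, map_smul, real_smul, ofReal_ofNat, hz]
  ring

theorem rotation_reflected_resolvent_tight_general
    (d ψ γ : ℝ)
    (A J : EuclideanSpace ℝ (Fin 2) → EuclideanSpace ℝ (Fin 2))
    (hA : ∀ v : EuclideanSpace ℝ (Fin 2),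
      A v = (WithLp.equiv 2 (Fin 2 → ℝ)).symm
        ![d * (Real.cos ψ * v 0 - Real.sin ψ * v 1),
          d * (Real.sin ψ * v 0 + Real.cos ψ * v 1)])
    (hJ : ∀ x : EuclideanSpace ℝ (Fin 2), J x + γ • A (J x) = x) :
    (∃ c s : ℝ, c ^ 2 + s ^ 2 = 1 ∧
      ∀ z : EuclideanSpace ℝ (Fin 2),
        (2 : ℝ) • J z - z =
          Real.sqrt (1 - 4 * γ * (d * Real.cos ψ) /
              (1 + 2 * γ * (d * Real.cos ψ) + (γ * d) ^ 2)) •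
            (WithLp.equiv 2 (Fin 2 → ℝ)).symm
              ![c * z 0 + s * z 1, -s * z 0 + c * z 1]) ∧
    (∀ z : EuclideanSpace ℝ (Fin 2),
      ‖(2 : ℝ) • J z - z‖ =
        Real.sqrt (1 - 4 * γ * (d * Real.cos ψ) /
          (1 + 2 * γ * (d * Real.cos ψ) + (γ * d) ^ 2)) * ‖z‖) := by
  set w : ℂ := ⟨d * Real.cos ψ, d * Real.sin ψ⟩
  have hAw (v : EuclideanSpace ℝ (Fin 2)) :
      A v = orthonormalBasisOneI.repr (w * orthonormalBasisOneI.repr.symm v) := by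
    simp only [hA, orthonormalBasisOneI_repr_mul_repr_symm, w, mul_sub, mul_add, mul_assoc]
  obtain ⟨hne, hR⟩ := reflected_resolvent_eq_cayley_mul γ w A J hAw hJ
  have hnorm : ‖(1 - γ * w) / (1 + γ * w)‖ = Real.sqrt (1 - 4 * γ * (d * Real.cos ψ) /
      (1 + 2 * γ * (d * Real.cos ψ) + (γ * d) ^ 2)) := by
    rw [norm_one_sub_div_one_add hne]
    congr 3
    · simp only [re_ofReal_mul, w]
      ring
    · simp only [normSq_apply, add_re, add_im, one_re, one_im, re_ofReal_mul, im_ofReal_mul, w]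
      linear_combination (γ * d) ^ 2 * Real.sin_sq_add_cos_sq ψ
  obtain ⟨c, s, hcs, hrot⟩ :=
    exists_orthonormalBasisOneI_repr_mul_eq_norm_smul_rotation ((1 - γ * w) / (1 + γ * w))
  refine ⟨⟨c, s, hcs, fun z => ?_⟩, fun z => ?_⟩
  · rw [hR, hrot, hnorm]
  · rw [hR, norm_orthonormalBasisOneI_repr_mul, hnorm]

theorem rotation_reflected_resolvent_tight
    (d ψ γ : ℝ) (hd : 0 < d) (hψ0 : 0 ≤ ψ) (hψ : ψ < Real.pi / 2) (hγ : 0 < γ)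
    (A J : EuclideanSpace ℝ (Fin 2) → EuclideanSpace ℝ (Fin 2))
    (hA : ∀ v : EuclideanSpace ℝ (Fin 2),
      A v = (WithLp.equiv 2 (Fin 2 → ℝ)).symm
        ![d * (Real.cos ψ * v 0 - Real.sin ψ * v 1),
          d * (Real.sin ψ * v 0 + Real.cos ψ * v 1)])
    (hJ : ∀ x : EuclideanSpace ℝ (Fin 2), J x + γ • A (J x) = x) :
    (∃ c s : ℝ, c ^ 2 + s ^ 2 = 1 ∧
      ∀ z : EuclideanSpace ℝ (Fin 2),
        (2 : ℝ) • J z - z =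
          Real.sqrt (1 - 4 * γ * (d * Real.cos ψ) /
              (1 + 2 * γ * (d * Real.cos ψ) + (γ * d) ^ 2)) •
            (WithLp.equiv 2 (Fin 2 → ℝ)).symm
              ![c * z 0 + s * z 1, -s * z 0 + c * z 1]) ∧
    (∀ z : EuclideanSpace ℝ (Fin 2),
      ‖(2 : ℝ) • J z - z‖ =
        Real.sqrt (1 - 4 * γ * (d * Real.cos ψ) /
          (1 + 2 * γ * (d * Real.cos ψ) + (γ * d) ^ 2)) * ‖z‖) :=
  rotation_reflected_resolvent_tight_general d ψ γ A J hA hJ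
end
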